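/- arXiv:1307.1940 — 3 statements merged into one kernel-verified Lean document; each statement's English description precedes it below -/
import Mathlib

section
/- In the three-node cycle with positive susceptances, the sign of ∂p_12/∂β_12 equals the sign of p_12: decreasing the susceptance of an overloaded line always decreases the magnitude of the flow on that line. -/
/-!
With `β₁₃, β₂₃, p₁, p₂` fixed, `p₁₂ = K · g(β₁₂)` where `K = p₁β₂₃ - p₂β₁₃` does not depend on
`β₁₂` and `g(b) = b / (b(β₁₃ + β₂₃) + β₁₃β₂₃)` is positive with positive derivative for `b > 0`.
Hence `∂p₁₂/∂β₁₂ · p₁₂ = K² · g' · g`, which is nonnegative, and positive exactly when `K ≠ 0`,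
i.e. when `p₁₂ ≠ 0`.
-/

/-- Flow on line (1,2) of the three-node cycle as a function of its own
susceptance `b = β₁₂`, with fixed `β₁₃, β₂₃, p₁, p₂`. -/
noncomputable def flow12own (β13 β23 p1 p2 : ℝ) (b : ℝ) : ℝ :=
  b * (p1 * β23 - p2 * β13) / (b * β13 + b * β23 + β13 * β23)

lemma deriv_const_mul_mul_self_sign_of_hasDerivAt {g : ℝ → ℝ} {g' x : ℝ} (K : ℝ)
    (hg : HasDerivAt g g' x) (hg' : 0 < g') (hgx : 0 < g x) :
    0 ≤ deriv (fun y => K * g y) x * (K * g x) ∧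
      (K * g x ≠ 0 → 0 < deriv (fun y => K * g y) x * (K * g x)) := by
  have hprod : deriv (fun y => K * g y) x * (K * g x) = K ^ 2 * (g' * g x) := by
    rw [(hg.const_mul K).deriv]
    ring
  rw [hprod]
  refine ⟨by positivity, fun hne => ?_⟩
  have hK : K ≠ 0 := left_ne_zero_of_mul hne
  positivity

lemma hasDerivAt_div_mul_add (s c b : ℝ) (hb : b * s + c ≠ 0) :
    HasDerivAt (fun x => x / (x * s + c)) (c / (b * s + c) ^ 2) b := by
  have hden : HasDerivAt (fun x => x * s + c) s b := by
    simpa using ((hasDerivAt_id b).mul_const s).add_const c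
  exact ((hasDerivAt_id' b).div hden hb).congr_deriv (by ring)

lemma flow12own_eq_const_mul (β13 β23 p1 p2 : ℝ) :
    flow12own β13 β23 p1 p2 =
      fun b => (p1 * β23 - p2 * β13) * (b / (b * (β13 + β23) + β13 * β23)) := by
  funext b
  unfold flow12own
  ring

/-- The sign of `∂p₁₂/∂β₁₂` equals the sign of `p₁₂`:
`∂p₁₂/∂β₁₂ · p₁₂ ≥ 0`, with strict inequality when `p₁₂ ≠ 0`. -/
theorem three_node_own_sensitivity_sign
    (β12 β13 β23 p1 p2 : ℝ)
    (h12 : 0 < β12) (h13 : 0 < β13) (h23 : 0 < β23) :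
    0 ≤ deriv (flow12own β13 β23 p1 p2) β12 * flow12own β13 β23 p1 p2 β12 ∧
      (flow12own β13 β23 p1 p2 β12 ≠ 0 →
        0 < deriv (flow12own β13 β23 p1 p2) β12 * flow12own β13 β23 p1 p2 β12) := by
  have hden : 0 < β12 * (β13 + β23) + β13 * β23 := by positivity
  rw [flow12own_eq_const_mul]
  exact deriv_const_mul_mul_self_sign_of_hasDerivAt _
    (hasDerivAt_div_mul_add _ _ β12 hden.ne') (by positivity) (by positivity)
end

section
/- In the three-node cycle with positive susceptances, the sign of ∂p_12/∂β_23 equals the sign of p_23, the flow on the neighboring line (2,3). -/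
/-!
Both quantities are positive multiples of `K = β₁₂ (p₁ + p₂) + β₁₃ p₂`: the quotient rule gives
`∂p₁₂/∂β₂₃ = β₁₂ β₁₃ K / D²`, while `p₂₃ = β₂₃ K / D`, with `D = β₁₂ β₁₃ + β₁₂ β₂₃ + β₁₃ β₂₃ > 0`.
-/

/-- Flow on line (1,2) of the three-node cycle as a function of the neighboring
susceptance `b = β₂₃`, with fixed `β₁₂, β₁₃, p₁, p₂`. -/
noncomputable def flow12neighbor (β12 β13 p1 p2 : ℝ) (b : ℝ) : ℝ :=
  β12 * (p1 * b - p2 * β13) / (β12 * β13 + β12 * b + β13 * b)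

namespace Real

theorem sign_mul_of_pos_left {c : ℝ} (hc : 0 < c) (x : ℝ) : sign (c * x) = sign x := by
  rcases lt_trichotomy x 0 with hx | rfl | hx
  · rw [sign_of_neg hx, sign_of_neg (mul_neg_of_pos_of_neg hc hx)]
  · rw [mul_zero]
  · rw [sign_of_pos hx, sign_of_pos (mul_pos hc hx)]

theorem sign_div_of_pos {c : ℝ} (hc : 0 < c) (x : ℝ) : sign (x / c) = sign x := by
  rw [div_eq_inv_mul, sign_mul_of_pos_left (inv_pos.2 hc)]

end Real

theorem hasDerivAt_linearFractional (a c d e x : ℝ) (hx : d * x + e ≠ 0) :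
    HasDerivAt (fun t => (a * t + c) / (d * t + e)) ((a * e - c * d) / (d * x + e) ^ 2) x := by
  have hnum := ((hasDerivAt_id' x).const_mul a).add_const c
  have hden := ((hasDerivAt_id' x).const_mul d).add_const e
  exact (hnum.div hden hx).congr_deriv (by ring)

theorem flow12neighbor_eq_linearFractional (β12 β13 p1 p2 : ℝ) :
    flow12neighbor β12 β13 p1 p2 =
      fun b => (β12 * p1 * b + -(β12 * p2 * β13)) / ((β12 + β13) * b + β12 * β13) := by
  funext b
  unfold flow12neighbor
  congr 1 <;> ring

theorem deriv_flow12neighbor (β12 β13 p1 p2 b : ℝ)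
    (hD : β12 * β13 + β12 * b + β13 * b ≠ 0) :
    deriv (flow12neighbor β12 β13 p1 p2) b =
      β12 * β13 * (β12 * (p1 + p2) + β13 * p2) / (β12 * β13 + β12 * b + β13 * b) ^ 2 := by
  have hD' : (β12 + β13) * b + β12 * β13 ≠ 0 := by
    rwa [show (β12 + β13) * b + β12 * β13 = β12 * β13 + β12 * b + β13 * b by ring]
  rw [flow12neighbor_eq_linearFractional,
    (hasDerivAt_linearFractional _ _ _ _ b hD').deriv]
  congr 1 <;> ring

/-- The sign of `∂p₁₂/∂β₂₃` equals the sign of the flow `p₂₃` on the neighboring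
line (2,3), where `p₂₃ = β₂₃ (p₂ β₁₃ - p₃ β₁₂)/D` with `p₃ = -(p₁+p₂)`. -/
theorem three_node_neighbor_sensitivity_sign
    (β12 β13 β23 p1 p2 : ℝ)
    (h12 : 0 < β12) (h13 : 0 < β13) (h23 : 0 < β23) :
    Real.sign (deriv (flow12neighbor β12 β13 p1 p2) β23)
      = Real.sign (β23 * (p2 * β13 - (-(p1 + p2)) * β12) /
          (β12 * β13 + β12 * β23 + β13 * β23)) := by
  have hD : 0 < β12 * β13 + β12 * β23 + β13 * β23 := by positivity
  rw [deriv_flow12neighbor β12 β13 p1 p2 β23 hD.ne', Real.sign_div_of_pos (pow_pos hD 2),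
    Real.sign_mul_of_pos_left (mul_pos h12 h13), Real.sign_div_of_pos hD,
    Real.sign_mul_of_pos_left h23]
  congr 1
  ring
end

section
/- In the three-node cycle, the flow p_12, viewed as a function of (β_12, β_13, β_23) on the positive octant, is not a convex function and not a concave function in general: there exist positive injections p_1, p_2 and susceptance points at which the Hessian of p_12 is indefinite. -/
/-- Flow on line (1,2) of the three-node cycle as a function of all three
susceptances `β = (β₁₂, β₁₃, β₂₃)`. -/
noncomputable def flow12 (p1 p2 : ℝ) (β : ℝ × ℝ × ℝ) : ℝ :=
  β.1 * (p1 * β.2.2 - p2 * β.2.1) /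
    (β.1 * β.2.1 + β.1 * β.2.2 + β.2.1 * β.2.2)

/-- The positive octant of susceptance space. -/
def posOctant : Set (ℝ × ℝ × ℝ) := {β | 0 < β.1 ∧ 0 < β.2.1 ∧ 0 < β.2.2}

/-- The flow `p₁₂`, as a function of the susceptances on the positive octant, is
in general neither convex nor concave: there exist positive injections for which
it is neither. -/
theorem flow12_not_convex_not_concave :
    ∃ p1 p2 : ℝ, 0 < p1 ∧ 0 < p2 ∧
      ¬ ConvexOn ℝ posOctant (flow12 p1 p2) ∧
      ¬ ConcaveOn ℝ posOctant (flow12 p1 p2) := by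
  refine ⟨1, 1, one_pos, one_pos, ?_, ?_⟩
  · intro h
    have hx : ((1 : ℝ), (1 : ℝ), (2 : ℝ)) ∈ posOctant := ⟨by norm_num, by norm_num, by norm_num⟩
    have hy : ((3 : ℝ), (1 : ℝ), (2 : ℝ)) ∈ posOctant := ⟨by norm_num, by norm_num, by norm_num⟩
    have := h.2 hx hy (show (0:ℝ) ≤ 1/2 by norm_num) (show (0:ℝ) ≤ 1/2 by norm_num) (show (1:ℝ)/2 + 1/2 = 1 by norm_num)
    simp only [flow12, Prod.smul_mk, Prod.mk_add_mk, smul_eq_mul] at this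
    norm_num at this
  · intro h
    have hx : ((1 : ℝ), (1 : ℝ), (1 : ℝ)) ∈ posOctant := ⟨by norm_num, by norm_num, by norm_num⟩
    have hy : ((1 : ℝ), (3 : ℝ), (1 : ℝ)) ∈ posOctant := ⟨by norm_num, by norm_num, by norm_num⟩
    have := h.2 hx hy (show (0:ℝ) ≤ 1/2 by norm_num) (show (0:ℝ) ≤ 1/2 by norm_num) (show (1:ℝ)/2 + 1/2 = 1 by norm_num)
    simp only [flow12, Prod.smul_mk, Prod.mk_add_mk, smul_eq_mul] at this
    norm_num at this
end
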